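/- arXiv:math/0703673 — 4 statements merged into one kernel-verified Lean document; each statement's English description precedes it below -/
import Mathlib

section
/- Let A = [[1,0],[0,0]] and B = [[λ, √(λ(1−λ))], [√(λ(1−λ)), 1−λ]] with λ = 3 − 2√2. Then the operator norm of A − B equals √(2√2 − 2). -/
/-!
`A` and `B` are the orthogonal projections onto two lines in `ℝ²` with `cos² = λ` between them.
Their difference `M` is symmetric with `Mᵀ M = (1 - λ) • 1`, so by the C⋆-identity
`‖M‖² = ‖Mᵀ M‖ = 1 - λ`, and `1 - λ = 2√2 - 2`.
-/

theorem Matrix.norm_toEuclideanCLM_of_star_mul_self_eq_smul_one {n 𝕜 : Type*} [Fintype n]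
    [DecidableEq n] [Nonempty n] [RCLike 𝕜] {M : Matrix n n 𝕜} {c : ℝ} (hc : 0 ≤ c)
    (hM : star M * M = (c : 𝕜) • 1) :
    ‖Matrix.toEuclideanCLM (𝕜 := 𝕜) M‖ = √c := by
  have hsq : ‖Matrix.toEuclideanCLM (𝕜 := 𝕜) M‖ * ‖Matrix.toEuclideanCLM (𝕜 := 𝕜) M‖ = c := by
    rw [← CStarRing.norm_star_mul_self, ← map_star, ← map_mul, hM, map_smul, map_one, norm_smul,
      norm_one, mul_one, RCLike.norm_ofReal, abs_of_nonneg hc]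
  rw [← hsq, Real.sqrt_mul_self (norm_nonneg _)]

theorem norm_toEuclideanCLM_sub_lineProjection {lam : ℝ} (h0 : 0 ≤ lam) (h1 : lam ≤ 1) :
    ‖Matrix.toEuclideanCLM (𝕜 := ℝ)
        (!![1, 0; 0, 0] - !![lam, √(lam * (1 - lam)); √(lam * (1 - lam)), 1 - lam] :
          Matrix (Fin 2) (Fin 2) ℝ)‖
      = √(1 - lam) := by
  have hs : √(lam * (1 - lam)) ^ 2 = lam * (1 - lam) := Real.sq_sqrt (by nlinarith)
  refine Matrix.norm_toEuclideanCLM_of_star_mul_self_eq_smul_one (by linarith) ?_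
  ext i j
  fin_cases i <;> fin_cases j <;>
    simp [Matrix.mul_apply, Fin.sum_univ_two] <;> nlinarith

/-- With `λ = 3 − 2√2`, the operator norm of `A − B` equals `√(2√2 − 2)`,
where `A = [[1,0],[0,0]]` and `B = [[λ, √(λ(1−λ))],[√(λ(1−λ)), 1−λ]]`. -/
theorem stmt_4 (lam : ℝ) (hlam : lam = 3 - 2 * Real.sqrt 2)
    (A B : Matrix (Fin 2) (Fin 2) ℝ)
    (hA : A = !![1, 0; 0, 0])
    (hB : B = !![lam, Real.sqrt (lam * (1 - lam)); Real.sqrt (lam * (1 - lam)), 1 - lam]) :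
    ‖Matrix.toEuclideanCLM (𝕜 := ℝ) A - Matrix.toEuclideanCLM (𝕜 := ℝ) B‖
      = Real.sqrt (2 * Real.sqrt 2 - 2) := by
  have h2 : √2 ^ 2 = 2 := Real.sq_sqrt (by norm_num)
  have h2_nonneg : 0 ≤ √2 := Real.sqrt_nonneg 2
  subst hA hB
  rw [← map_sub, norm_toEuclideanCLM_sub_lineProjection (by nlinarith) (by nlinarith), hlam]
  ring_nf
end

section
/- Let M be a II₁ factor with trace τ and N ⊆ M a subfactor with finite Jones index, and let λ₁,…,λ_k be a Pimsner–Popa basis with λ₁ = 1 and E_N(λ_i*λ_j) = 0 for i ≠ j. Then for every unitary u ∈ N, the sum over 2 ≤ i,j ≤ k of ‖E_N(λ_i* u λ_j)‖₂² equals [M:N] − 1. -/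
/-- Abstract form of the Pimsner–Popa computation in a basic construction
`N ⊆ M ⊆ ⟨M, e_N⟩ = A`: if `λ₁,…,λ_k` is a Pimsner–Popa basis with `λ₁ = 1` and
`E_N(λ_i* λ_j) = 0` for `i ≠ j`, then for every unitary `u ∈ N`,
`Σ_{i,j ≥ 2} ‖E_N(λ_i* u λ_j)‖₂² = [M:N] − 1`, where `[M:N] = Tr 1`.

Here `A` plays the role of the basic construction `⟨M, e_N⟩`, `Tr` its (finite, since
the index is finite) trace with `Tr(x e y) = τ(xy)` for `x, y ∈ M`, `τ` the trace of `M`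
with `τ(1) = 1`, `e` the Jones projection with `e x e = E(x) e` for `x ∈ M`, commuting
with `N`, and `‖z‖₂² = τ(z* z)`. -/
theorem stmt_8 {A : Type*} [Ring A] [StarRing A] [Algebra ℂ A] [StarModule ℂ A]
    (M N : StarSubalgebra ℂ A) (hNM : N ≤ M)
    (Tr τ : A →ₗ[ℂ] ℂ) (E : A →ₗ[ℂ] A) (e : A)
    -- the Jones projection
    (he2 : e * e = e) (hestar : star e = e)
    (heN : ∀ y ∈ N, e * y = y * e)
    (heEe : ∀ x ∈ M, e * x * e = E x * e)
    -- the conditional expectation onto N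
    (hEN : ∀ x ∈ M, E x ∈ N) (hEid : ∀ x ∈ N, E x = x)
    (hEstar : ∀ x, E (star x) = star (E x))
    (hEmod : ∀ a ∈ N, ∀ b ∈ N, ∀ x ∈ M, E (a * x * b) = a * E x * b)
    -- the traces
    (hTrtrace : ∀ x y : A, Tr (x * y) = Tr (y * x))
    (hτtrace : ∀ x ∈ M, ∀ y ∈ M, τ (x * y) = τ (y * x))
    (hτ1 : τ 1 = 1)
    (hTrτ : ∀ x ∈ M, ∀ y ∈ M, Tr (x * e * y) = τ (x * y))
    -- the Pimsner–Popa basis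
    (k : ℕ) (l : Fin k → A) (hlM : ∀ j, l j ∈ M)
    (hbasis : ∑ j, l j * e * star (l j) = 1)
    (hl0 : k ≠ 0) (hl1 : l ⟨0, Nat.pos_of_ne_zero hl0⟩ = 1)
    (horth : ∀ i j, i ≠ j → E (star (l i) * l j) = 0)
    -- a unitary in N
    (u : A) (huN : u ∈ N) (hu1 : star u * u = 1) (hu2 : u * star u = 1) :
    ∑ i ∈ Finset.univ.erase ⟨0, Nat.pos_of_ne_zero hl0⟩,
      ∑ j ∈ Finset.univ.erase ⟨0, Nat.pos_of_ne_zero hl0⟩,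
        τ (star (E (star (l i) * u * l j)) * E (star (l i) * u * l j))
      = Tr 1 - 1 := by
  set i0 : Fin k := ⟨0, Nat.pos_of_ne_zero hl0⟩ with hi0
  -- membership facts
  have huM : u ∈ M := hNM huN
  have hlM' : ∀ i, star (l i) ∈ M := fun i => star_mem (hlM i)
  have hxM : ∀ i j, star (l i) * u * l j ∈ M := fun i j =>
    mul_mem (mul_mem (hlM' i) huM) (hlM j)
  have hbN : ∀ i j, E (star (l i) * u * l j) ∈ N := fun i j => hEN _ (hxM i j)
  have hbM : ∀ i j, E (star (l i) * u * l j) ∈ M := fun i j => hNM (hbN i j)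
  -- τ ∘ E = τ on M
  have hτE : ∀ x ∈ M, τ (E x) = τ x := by
    intro x hx
    have h1 : Tr (E x * e * 1) = τ (E x * 1) := hTrτ (E x) (hNM (hEN x hx)) 1 (one_mem M)
    have h2 : Tr (1 * e * x) = τ (1 * x) := hTrτ 1 (one_mem M) x hx
    have h3 : Tr (e * x * e) = Tr (e * x) := by
      rw [mul_assoc, hTrtrace e (x * e), mul_assoc, he2, hTrtrace x e]
    calc τ (E x) = τ (E x * 1) := by rw [mul_one]
      _ = Tr (E x * e * 1) := h1.symm
      _ = Tr (E x * e) := by rw [mul_one]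
      _ = Tr (e * x * e) := by rw [heEe x hx]
      _ = Tr (e * x) := h3
      _ = Tr (1 * e * x) := by rw [one_mul]
      _ = τ (1 * x) := h2
      _ = τ x := by rw [one_mul]
  have hτE' : ∀ a ∈ N, ∀ y ∈ M, τ (a * E y) = τ (a * y) := by
    intro a ha y hy
    have h := hEmod a ha 1 (one_mem N) y hy
    rw [mul_one, mul_one] at h
    rw [← h, hτE (a * y) (mul_mem (hNM ha) hy)]
  -- abbreviation for the summand
  set F : Fin k → Fin k → ℂ := fun i j =>
    τ (star (E (star (l i) * u * l j)) * E (star (l i) * u * l j)) with hF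
  -- per-term computation
  have hterm : ∀ i j, Tr ((l i * e * star (l i)) * (u * ((l j * e * star (l j)) * star u)))
      = F i j := by
    intro i j
    have hx := hxM i j
    have hmem1 : l i * E (star (l i) * u * l j) ∈ M := mul_mem (hlM i) (hbM i j)
    have hmem2 : star (l j) * star u ∈ M := mul_mem (hlM' j) (star_mem huM)
    have hmem3 : star (l j) * star u * l i ∈ M := mul_mem hmem2 (hlM i)
    have step1 : (l i * e * star (l i)) * (u * ((l j * e * star (l j)) * star u))
        = l i * ((e * (star (l i) * u * l j) * e) * (star (l j) * star u)) := by
      simp only [mul_assoc]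
    rw [step1, heEe _ hx]
    have step2 : l i * ((E (star (l i) * u * l j) * e) * (star (l j) * star u))
        = (l i * E (star (l i) * u * l j)) * e * (star (l j) * star u) := by
      simp only [mul_assoc]
    rw [step2, hTrτ _ hmem1 _ hmem2, hτtrace _ hmem1 _ hmem2]
    have step3 : (star (l j) * star u) * (l i * E (star (l i) * u * l j))
        = (star (l j) * star u * l i) * E (star (l i) * u * l j) := by
      simp only [mul_assoc]
    rw [step3, hτtrace _ hmem3 _ (hbM i j), ← hτE' _ (hbN i j) _ hmem3]
    have step4 : E (star (l j) * star u * l i) = star (E (star (l i) * u * l j)) := by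
      have hst : star (l j) * star u * l i = star (star (l i) * u * l j) := by
        simp [star_mul, mul_assoc]
      rw [hst, hEstar]
    rw [step4, hτtrace _ (hbM i j) _ (star_mem (hbM i j))]
  -- the total double sum equals Tr 1
  have hFtotal : ∑ i, ∑ j, F i j = Tr 1 := by
    have hone : ∑ i, ∑ j, (l i * e * star (l i)) * (u * ((l j * e * star (l j)) * star u))
        = (1 : A) := by
      have : (∑ i, l i * e * star (l i)) * (u * ((∑ j, l j * e * star (l j)) * star u))
          = ∑ i, ∑ j, (l i * e * star (l i)) * (u * ((l j * e * star (l j)) * star u)) := by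
        rw [Finset.sum_mul]
        refine Finset.sum_congr rfl fun i _ => ?_
        rw [Finset.sum_mul, Finset.mul_sum, Finset.mul_sum]
      rw [← this, hbasis, one_mul, one_mul, hu2]
    calc ∑ i, ∑ j, F i j
        = ∑ i, ∑ j, Tr ((l i * e * star (l i)) * (u * ((l j * e * star (l j)) * star u))) := by
          refine Finset.sum_congr rfl fun i _ => Finset.sum_congr rfl fun j _ => ?_
          rw [hterm]
      _ = Tr (∑ i, ∑ j, (l i * e * star (l i)) * (u * ((l j * e * star (l j)) * star u))) := by
          rw [map_sum]
          exact Finset.sum_congr rfl fun i _ => (map_sum Tr _ _).symm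
      _ = Tr 1 := by rw [hone]
  -- vanishing of the boundary terms
  have hEl : ∀ j, j ≠ i0 → E (l j) = 0 := by
    intro j hj
    have h := horth i0 j (Ne.symm hj)
    rwa [hl1, star_one, one_mul] at h
  have hFrow : ∀ j, j ≠ i0 → F i0 j = 0 := by
    intro j hj
    have h := hEmod u huN 1 (one_mem N) (l j) (hlM j)
    rw [mul_one, mul_one] at h
    simp only [hF, hl1, star_one, one_mul, h, hEl j hj, mul_zero, star_zero, zero_mul, map_zero]
  have hFcol : ∀ i, i ≠ i0 → F i i0 = 0 := by
    intro i hi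
    have h := hEmod 1 (one_mem N) u huN (star (l i)) (hlM' i)
    rw [one_mul, one_mul] at h
    simp only [hF, hl1, mul_one, h, hEstar, hEl i hi, star_zero, zero_mul, mul_zero, map_zero]
  have hFdiag : F i0 i0 = 1 := by
    simp only [hF, hl1, star_one, one_mul, mul_one, hEid u huN, hu1, hτ1]
  -- assemble
  have hrowsum : ∑ j, F i0 j = 1 := by
    rw [Finset.sum_eq_single i0 (fun j _ hj => hFrow j hj) (fun h => absurd (Finset.mem_univ i0) h)]
    exact hFdiag
  calc ∑ i ∈ Finset.univ.erase i0, ∑ j ∈ Finset.univ.erase i0, F i j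
      = ∑ i ∈ Finset.univ.erase i0, (∑ j, F i j - F i i0) := by
        refine Finset.sum_congr rfl fun i _ => ?_
        exact Finset.sum_erase_eq_sub (Finset.mem_univ i0)
    _ = ∑ i ∈ Finset.univ.erase i0, ∑ j, F i j
          - ∑ i ∈ Finset.univ.erase i0, F i i0 := Finset.sum_sub_distrib _ _
    _ = ∑ i ∈ Finset.univ.erase i0, ∑ j, F i j := by
        rw [Finset.sum_eq_zero fun i hi => hFcol i (Finset.mem_erase.mp hi).1, sub_zero]
    _ = ∑ i, ∑ j, F i j - ∑ j, F i0 j := Finset.sum_erase_eq_sub (Finset.mem_univ i0)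
    _ = Tr 1 - 1 := by rw [hFtotal, hrowsum]
end

section
/- Let M be a II₁ factor and N a subfactor with 1 < [M:N] < ∞. Then N does not have the weak asymptotic homomorphism property in M: there exist finite sets x₁,…,x_n, y₁,…,y_m ∈ M and ε > 0 such that for every unitary u ∈ N, some i,j satisfy ‖E_N(x_i u y_j) − E_N(x_i) u E_N(y_j)‖₂ ≥ ε. -/
lemma cs_aux {A : Type*} [Ring A] [StarRing A] [Algebra ℂ A] [StarModule ℂ A]
    (τ : A →ₗ[ℂ] ℂ)
    (hτpos : ∀ x : A, 0 ≤ (τ (star x * x)).re ∧ (τ (star x * x)).im = 0)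
    (p q : A) :
    ‖τ (star p * q)‖ ≤
      Real.sqrt ((τ (star p * p)).re) * Real.sqrt ((τ (star q * q)).re) := by
  have him : ∀ x : A, (τ (star x * x)).im = 0 := fun x => (hτpos x).2
  have hsymm : ∀ x y : A, (starRingEnd ℂ) (τ (star y * x)) = τ (star x * y) := by
    intro x y
    have e1 : (τ (star x * y)).im + (τ (star y * x)).im = 0 := by
      have h := him (x + y)
      have hexp : τ (star (x + y) * (x + y)) =
          τ (star x * x) + τ (star x * y) + τ (star y * x) + τ (star y * y) := by
        simp only [star_add, add_mul, mul_add, map_add]; ring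
      rw [hexp] at h
      simp only [Complex.add_im, him x, him y] at h
      linarith
    have e2 : (τ (star x * y)).re - (τ (star y * x)).re = 0 := by
      have h := him (x + Complex.I • y)
      have hexp : τ (star (x + Complex.I • y) * (x + Complex.I • y)) =
          τ (star x * x) + Complex.I * τ (star x * y) - Complex.I * τ (star y * x)
            + τ (star y * y) := by
        simp only [star_add, star_smul, Complex.star_def, Complex.conj_I, add_mul, mul_add,
          neg_smul, smul_mul_assoc, mul_smul_comm, map_add, map_neg, map_smul, smul_eq_mul,
          neg_mul, mul_neg, neg_neg]
        ring_nf
        rw [Complex.I_sq]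
        ring
      rw [hexp] at h
      simp only [Complex.add_im, Complex.sub_im, Complex.mul_im, Complex.I_re, Complex.I_im,
        him x, him y, zero_mul, one_mul, zero_add, add_zero] at h
      linarith
    apply Complex.ext
    · simpa using by linarith [e2]
    · simp only [Complex.conj_im]; linarith [e1]
  let c : PreInnerProductSpace.Core ℂ A :=
    { inner := fun x y => τ (star x * y)
      conj_inner_symm := hsymm
      re_inner_nonneg := fun x => (hτpos x).1
      add_left := fun x y z => by simp [star_add, add_mul]
      smul_left := fun x y r => by
        simp [star_smul, smul_mul_assoc, Complex.star_def, smul_eq_mul] }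
  have h : ‖τ (star p * q)‖ * ‖τ (star q * p)‖ ≤ (τ (star p * p)).re * (τ (star q * q)).re := by
    exact
      InnerProductSpace.Core.inner_mul_inner_self_le (𝕜 := ℂ) (c := c) p q
  have hqp : ‖τ (star q * p)‖ = ‖τ (star p * q)‖ := by
    rw [← hsymm p q, RCLike.norm_conj]
  rw [hqp] at h
  have h1 : ‖τ (star p * q)‖ * ‖τ (star p * q)‖ ≤ (τ (star p * p)).re * (τ (star q * q)).re := h
  have h2 : ‖τ (star p * q)‖ = Real.sqrt (‖τ (star p * q)‖ * ‖τ (star p * q)‖) := by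
    rw [Real.sqrt_mul_self (norm_nonneg _)]
  rw [h2]
  calc Real.sqrt (‖τ (star p * q)‖ * ‖τ (star p * q)‖)
      ≤ Real.sqrt ((τ (star p * p)).re * (τ (star q * q)).re) := Real.sqrt_le_sqrt h1
    _ = Real.sqrt ((τ (star p * p)).re) * Real.sqrt ((τ (star q * q)).re) :=
        Real.sqrt_mul (hτpos p).1 _


/-- A subfactor `N ⊆ M` of finite Jones index `[M:N] > 1` fails the weak asymptotic
homomorphism property: there exist finite families `x₁,…,x_n, y₁,…,y_m ∈ M` and `ε > 0`
such that every unitary `u ∈ N` satisfies `‖E_N(x_i u y_j) − E_N(x_i) u E_N(y_j)‖₂ ≥ ε`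
for some `i, j`.

The ambient algebra `A` plays the role of the basic construction `⟨M, e_N⟩` with its
(finite) trace `Tr`, Jones projection `e`, trace `τ` of `M` (whence the `2`-norm
`‖z‖₂ = √(Re τ(z*z))`), trace-preserving conditional expectation `E : M → N`, and a
Pimsner–Popa basis witnessing finiteness of the index `[M:N] = Tr 1 > 1`. -/
theorem stmt_9 {A : Type*} [Ring A] [StarRing A] [Algebra ℂ A] [StarModule ℂ A]
    (M N : StarSubalgebra ℂ A) (hNM : N ≤ M)
    (Tr τ : A →ₗ[ℂ] ℂ) (E : A →ₗ[ℂ] A) (e : A)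
    (he2 : e * e = e) (hestar : star e = e)
    (heN : ∀ y ∈ N, e * y = y * e)
    (heEe : ∀ x ∈ M, e * x * e = E x * e)
    (hEN : ∀ x ∈ M, E x ∈ N) (hEid : ∀ x ∈ N, E x = x)
    (hEstar : ∀ x, E (star x) = star (E x))
    (hEmod : ∀ a ∈ N, ∀ b ∈ N, ∀ x ∈ M, E (a * x * b) = a * E x * b)
    (hTrtrace : ∀ x y : A, Tr (x * y) = Tr (y * x))
    (hτtrace : ∀ x ∈ M, ∀ y ∈ M, τ (x * y) = τ (y * x))
    (hτ1 : τ 1 = 1)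
    (hτpos : ∀ x, 0 ≤ (τ (star x * x)).re ∧ (τ (star x * x)).im = 0)
    (hτfaithful : ∀ x ∈ M, τ (star x * x) = 0 → x = 0)
    (hTrτ : ∀ x ∈ M, ∀ y ∈ M, Tr (x * e * y) = τ (x * y))
    -- finite index `[M:N] = Tr 1 > 1`, witnessed by a Pimsner–Popa basis
    (ind : ℝ) (hind : Tr 1 = (ind : ℂ)) (hind1 : 1 < ind)
    (k : ℕ) (l : Fin k → A) (hlM : ∀ j, l j ∈ M)
    (hbasis : ∑ j, l j * e * star (l j) = 1) :
    ∃ (n m : ℕ) (x : Fin n → A) (y : Fin m → A) (ε : ℝ),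
      0 < ε ∧ (∀ i, x i ∈ M) ∧ (∀ j, y j ∈ M) ∧
      ∀ u ∈ N, star u * u = 1 → u * star u = 1 →
        ∃ i j, ε ≤ Real.sqrt
          ((τ (star (E (x i * u * y j) - E (x i) * u * E (y j)) *
            (E (x i * u * y j) - E (x i) * u * E (y j)))).re) := by
  classical
  have hMone : (1 : A) ∈ M := one_mem M
  have hNone : (1 : A) ∈ N := one_mem N
  have hEM : ∀ x ∈ M, E x ∈ M := fun x hx => hNM (hEN x hx)
  have hlMs : ∀ i, star (l i) ∈ M := fun i => star_mem (hlM i)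
  -- τ ∘ E = τ on M
  have hτE : ∀ z ∈ M, τ (E z) = τ z := by
    intro z hz
    have h1 : Tr (E z * e * 1) = τ (E z * 1) := hTrτ _ (hEM z hz) _ hMone
    have h2 : Tr (e * z) = τ z := by simpa using hTrτ 1 hMone z hz
    have h3 : E z * e = e * z * e := (heEe z hz).symm
    have h4 : Tr (e * z * e) = Tr (e * z) := by
      rw [hTrtrace (e * z) e, ← mul_assoc, he2]
    calc τ (E z) = τ (E z * 1) := by rw [mul_one]
      _ = Tr (E z * e * 1) := h1.symm
      _ = Tr (e * z * e) := by rw [mul_one, h3]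
      _ = Tr (e * z) := h4
      _ = τ z := h2
  -- τ (w z) = τ (w E z) for w ∈ N
  have hτEE : ∀ w ∈ N, ∀ z ∈ M, τ (w * z) = τ (w * E z) := by
    intro w hw z hz
    have h2 : E (w * z) = w * E z := by simpa using hEmod w hw 1 hNone z hz
    rw [← h2]
    exact (hτE (w * z) (mul_mem (hNM hw) hz)).symm
  -- Pimsner-Popa expansion
  have hLX : ∀ y ∈ M, ∑ i, E (y * l i) * star (l i) = y := by
    intro y hy
    set s := ∑ i, E (y * l i) * star (l i) with hs
    have hsM : s ∈ M := sum_mem fun i _ => mul_mem (hEM _ (mul_mem hy (hlM i))) (hlMs i)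
    have hez : e * (y - s) = 0 := by
      have h1 : e * y = ∑ i, E (y * l i) * (e * star (l i)) := by
        calc e * y = e * y * ∑ i, l i * e * star (l i) := by rw [hbasis, mul_one]
          _ = ∑ i, e * y * (l i * e * star (l i)) := Finset.mul_sum _ _ _
          _ = ∑ i, E (y * l i) * (e * star (l i)) := by
              refine Finset.sum_congr rfl fun i _ => ?_
              have hh : e * y * (l i * e * star (l i)) = e * (y * l i) * e * star (l i) := by
                simp [mul_assoc]
              rw [hh, heEe _ (mul_mem hy (hlM i)), mul_assoc]
      have h2 : e * s = ∑ i, E (y * l i) * (e * star (l i)) := by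
        rw [hs, Finset.mul_sum]
        refine Finset.sum_congr rfl fun i _ => ?_
        rw [← mul_assoc, heN _ (hEN _ (mul_mem hy (hlM i))), mul_assoc]
      rw [mul_sub, h1, h2, sub_self]
    have hτ0 : τ (star (y - s) * (y - s)) = 0 := by
      have h := hTrτ (star (y - s)) (star_mem (sub_mem hy hsM)) (y - s) (sub_mem hy hsM)
      rw [mul_assoc, hez, mul_zero, map_zero] at h
      exact h.symm
    have := hτfaithful (y - s) (sub_mem hy hsM) hτ0
    have := sub_eq_zero.mp this
    exact this.symm
  have hLX2 : ∀ y ∈ M, ∑ i, E (y * l i) * E (star (l i)) = E y := by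
    intro y hy
    conv_rhs => rw [← hLX y hy]
    rw [map_sum]
    refine Finset.sum_congr rfl fun i _ => ?_
    have h := hEmod (E (y * l i)) (hEN _ (mul_mem hy (hlM i))) 1 hNone (star (l i)) (hlMs i)
    simpa using h.symm
  -- index sum
  have hLind : ∑ j, τ (star (l j) * l j) = (ind : ℂ) := by
    have hper : ∀ j, τ (star (l j) * l j) = Tr (l j * e * star (l j)) := by
      intro j
      rw [hτtrace (star (l j)) (hlMs j) (l j) (hlM j)]
      exact (hTrτ (l j) (hlM j) (star (l j)) (hlMs j)).symm
    rw [Finset.sum_congr rfl fun j _ => hper j, ← map_sum, hbasis, hind]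
  -- the off-N parts of the basis
  have hmmM : ∀ j, l j - E (l j) ∈ M := fun j => sub_mem (hlM j) (hEM _ (hlM j))
  have hper2 : ∀ j, τ (star (l j - E (l j)) * (l j - E (l j))) =
      τ (star (l j) * l j) - τ (E (star (l j)) * E (l j)) := by
    intro j
    have hstar : star (l j - E (l j)) = star (l j) - E (star (l j)) := by
      rw [star_sub, hEstar]
    have hab : τ (star (l j) * E (l j)) = τ (E (star (l j)) * E (l j)) := by
      rw [hτtrace (star (l j)) (hlMs j) (E (l j)) (hEM _ (hlM j)),
        hτEE (E (l j)) (hEN _ (hlM j)) (star (l j)) (hlMs j)]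
      exact hτtrace _ (hEM _ (hlM j)) _ (hEM _ (hlMs j))
    have hba : τ (E (star (l j)) * l j) = τ (E (star (l j)) * E (l j)) :=
      hτEE _ (hEN _ (hlMs j)) _ (hlM j)
    rw [hstar, sub_mul, mul_sub, mul_sub, map_sub, map_sub, map_sub, hab, hba]
    ring
  set C : ℝ := (∑ j, τ (star (l j - E (l j)) * (l j - E (l j)))).re with hC
  have hCpos : 0 < C := by
    have hCnn : 0 ≤ C := by
      rw [hC, Complex.re_sum]
      exact Finset.sum_nonneg fun j _ => (hτpos _).1
    rcases hCnn.lt_or_eq with h | h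
    · exact h
    exfalso
    have hzero : ∀ j, l j - E (l j) = 0 := by
      intro j
      refine hτfaithful _ (hmmM j) ?_
      have hre : (τ (star (l j - E (l j)) * (l j - E (l j)))).re = 0 := by
        have h0 : ∑ j, (τ (star (l j - E (l j)) * (l j - E (l j)))).re = 0 := by
          rw [← Complex.re_sum, ← hC, ← h]
        exact (Finset.sum_eq_zero_iff_of_nonneg fun j _ => (hτpos _).1).mp h0 j (Finset.mem_univ j)
      exact Complex.ext hre (hτpos _).2
    have hlN : ∀ j, l j ∈ N := by
      intro j
      have : l j = E (l j) := sub_eq_zero.mp (hzero j)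
      rw [this]; exact hEN _ (hlM j)
    have h1 : (1 : A) = (∑ j, l j * star (l j)) * e := by
      rw [← hbasis, Finset.sum_mul]
      refine Finset.sum_congr rfl fun j _ => ?_
      rw [mul_assoc, heN (star (l j)) (star_mem (hlN j)), ← mul_assoc]
    have he1 : e = 1 := by
      calc e = 1 * e := (one_mul e).symm
        _ = (∑ j, l j * star (l j)) * e * e := by rw [← h1]
        _ = (∑ j, l j * star (l j)) * (e * e) := by rw [mul_assoc]
        _ = (∑ j, l j * star (l j)) * e := by rw [he2]
        _ = 1 := h1.symm
    have hTre : Tr 1 = 1 := by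
      have h := hTrτ 1 hMone 1 hMone
      rw [he1] at h
      simpa [hτ1] using h
    have : (ind : ℂ) = 1 := by rw [← hind, hTre]
    have : ind = 1 := by exact_mod_cast this
    linarith
  -- k > 0
  have hk0 : 0 < k := by
    rcases Nat.eq_zero_or_pos k with hk | hk
    · exfalso
      subst hk
      have h0 : (0 : A) = 1 := by simpa using hbasis
      have : (0 : ℂ) = 1 := by rw [← map_zero τ, h0, hτ1]
      exact zero_ne_one this
    · exact hk
  have hindpos : (0 : ℝ) < ind := lt_trans one_pos hind1
  have hsqrtpos : 0 < Real.sqrt ind := Real.sqrt_pos.mpr hindpos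
  have hkpos : (0 : ℝ) < (k : ℝ) ^ 2 := by positivity
  refine ⟨k, k, fun i => star (l i), fun j => l j, C / ((k : ℝ) ^ 2 * Real.sqrt ind),
    div_pos hCpos (mul_pos hkpos hsqrtpos), fun i => hlMs i, fun j => hlM j, ?_⟩
  intro u huN hu1 hu2
  by_contra hcon
  push_neg at hcon

  set ε : ℝ := C / ((k : ℝ) ^ 2 * Real.sqrt ind) with hε
  have huM : u ∈ M := hNM huN
  have haM : ∀ i j, star (l i) * u * l j ∈ M :=
    fun i j => mul_mem (mul_mem (hlMs i) huM) (hlM j)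
  have haN : ∀ i j, E (star (l i) * u * l j) ∈ N := fun i j => hEN _ (haM i j)
  have hastar : ∀ i j, star (E (star (l i) * u * l j)) = E (star (l j) * star u * l i) := by
    intro i j
    rw [← hEstar]
    congr 1
    simp [mul_assoc]
  -- K1
  have K1 : ∀ j, ∑ i, τ (star (E (star (l i) * u * l j)) * E (star (l i) * u * l j)) =
      τ (star (l j) * l j) := by
    intro j
    have step1 : ∀ i, τ (star (E (star (l i) * u * l j)) * E (star (l i) * u * l j)) =
        τ ((E (star (l j) * star u * l i) * star (l i)) * (u * l j)) := by
      intro i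
      rw [← hτEE (star (E (star (l i) * u * l j))) (star_mem (haN i j)) _ (haM i j),
        hastar i j]
      congr 1
      simp [mul_assoc]
    rw [Finset.sum_congr rfl fun i _ => step1 i, ← map_sum, ← Finset.sum_mul,
      hLX (star (l j) * star u) (mul_mem (hlMs j) (star_mem huM))]
    congr 1
    calc star (l j) * star u * (u * l j) = star (l j) * (star u * u * l j) := by
          simp [mul_assoc]
      _ = star (l j) * l j := by rw [hu1, one_mul]
  -- K2
  have K2 : ∀ j, ∑ i, τ (star (E (star (l i) * u * l j)) * (E (star (l i)) * u * E (l j))) =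
      τ (E (star (l j)) * E (l j)) := by
    intro j
    have step1 : ∀ i, star (E (star (l i) * u * l j)) * (E (star (l i)) * u * E (l j)) =
        (E (star (l j) * star u * l i) * E (star (l i))) * (u * E (l j)) := by
      intro i
      rw [hastar i j]
      simp [mul_assoc]
    rw [Finset.sum_congr rfl fun i _ => congrArg τ (step1 i), ← map_sum, ← Finset.sum_mul,
      hLX2 (star (l j) * star u) (mul_mem (hlMs j) (star_mem huM))]
    have hEu : E (star (l j) * star u) = E (star (l j)) * star u := by
      simpa using hEmod 1 hNone (star u) (star_mem huN) (star (l j)) (hlMs j)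
    rw [hEu]
    congr 1
    calc E (star (l j)) * star u * (u * E (l j)) = E (star (l j)) * (star u * u * E (l j)) := by
          simp [mul_assoc]
      _ = E (star (l j)) * E (l j) := by rw [hu1, one_mul]
  -- combined identity
  have KAD : ∑ j, ∑ i, τ (star (E (star (l i) * u * l j)) *
      (E (star (l i) * u * l j) - E (star (l i)) * u * E (l j))) =
      ∑ j, τ (star (l j - E (l j)) * (l j - E (l j))) := by
    refine Finset.sum_congr rfl fun j _ => ?_
    calc ∑ i, τ (star (E (star (l i) * u * l j)) *
          (E (star (l i) * u * l j) - E (star (l i)) * u * E (l j)))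
        = ∑ i, (τ (star (E (star (l i) * u * l j)) * E (star (l i) * u * l j)) -
            τ (star (E (star (l i) * u * l j)) * (E (star (l i)) * u * E (l j)))) := by
          refine Finset.sum_congr rfl fun i _ => ?_
          rw [mul_sub, map_sub]
      _ = _ - _ := Finset.sum_sub_distrib _ _
      _ = τ (star (l j) * l j) - τ (E (star (l j)) * E (l j)) := by rw [K1 j, K2 j]
      _ = τ (star (l j - E (l j)) * (l j - E (l j))) := (hper2 j).symm
  -- per-term bound for the a's
  have haBound : ∀ i j, (τ (star (E (star (l i) * u * l j)) * E (star (l i) * u * l j))).re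
      ≤ ind := by
    intro i j
    have h1 : (τ (star (E (star (l i) * u * l j)) * E (star (l i) * u * l j))).re ≤
        (∑ i', τ (star (E (star (l i') * u * l j)) * E (star (l i') * u * l j))).re := by
      rw [Complex.re_sum]
      exact Finset.single_le_sum
        (f := fun i' => (τ (star (E (star (l i') * u * l j)) * E (star (l i') * u * l j))).re)
        (fun i' _ => (hτpos _).1) (Finset.mem_univ i)
    have h3 : (τ (star (l j) * l j)).re ≤ ind := by
      have h4 : (∑ j', τ (star (l j') * l j')).re = ind := by
        rw [hLind, Complex.ofReal_re]
      rw [← h4, Complex.re_sum]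
      exact Finset.single_le_sum (f := fun j' => (τ (star (l j') * l j')).re)
        (fun j' _ => (hτpos _).1) (Finset.mem_univ j)
    rw [K1 j] at h1
    linarith
  -- Cauchy-Schwarz bound
  have hCS : ∀ i j, ‖τ (star (E (star (l i) * u * l j)) *
      (E (star (l i) * u * l j) - E (star (l i)) * u * E (l j)))‖ ≤
      Real.sqrt ind * Real.sqrt ((τ (star (E (star (l i) * u * l j) -
        E (star (l i)) * u * E (l j)) * (E (star (l i) * u * l j) -
        E (star (l i)) * u * E (l j)))).re) := by
    intro i j
    calc ‖τ (star (E (star (l i) * u * l j)) *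
          (E (star (l i) * u * l j) - E (star (l i)) * u * E (l j)))‖
        ≤ Real.sqrt ((τ (star (E (star (l i) * u * l j)) * E (star (l i) * u * l j))).re) *
          Real.sqrt ((τ (star (E (star (l i) * u * l j) - E (star (l i)) * u * E (l j)) *
            (E (star (l i) * u * l j) - E (star (l i)) * u * E (l j)))).re) :=
          cs_aux τ hτpos _ _
      _ ≤ Real.sqrt ind * Real.sqrt ((τ (star (E (star (l i) * u * l j) -
            E (star (l i)) * u * E (l j)) * (E (star (l i) * u * l j) -
            E (star (l i)) * u * E (l j)))).re) := by
          apply mul_le_mul_of_nonneg_right _ (Real.sqrt_nonneg _)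
          exact Real.sqrt_le_sqrt (haBound i j)
  -- final contradiction
  haveI : Nonempty (Fin k) := ⟨⟨0, hk0⟩⟩
  have hstep : C ≤ Real.sqrt ind * ∑ j, ∑ i,
      Real.sqrt ((τ (star (E (star (l i) * u * l j) - E (star (l i)) * u * E (l j)) *
        (E (star (l i) * u * l j) - E (star (l i)) * u * E (l j)))).re) := by
    calc C = (∑ j, ∑ i, τ (star (E (star (l i) * u * l j)) *
          (E (star (l i) * u * l j) - E (star (l i)) * u * E (l j)))).re := by
          rw [hC, ← KAD]
      _ ≤ ‖∑ j, ∑ i, τ (star (E (star (l i) * u * l j)) *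
          (E (star (l i) * u * l j) - E (star (l i)) * u * E (l j)))‖ :=
          Complex.re_le_norm _
      _ ≤ ∑ j, ∑ i, ‖τ (star (E (star (l i) * u * l j)) *
          (E (star (l i) * u * l j) - E (star (l i)) * u * E (l j)))‖ := by
          refine le_trans (norm_sum_le _ _) (Finset.sum_le_sum fun j _ => norm_sum_le _ _)
      _ ≤ ∑ j, ∑ i, Real.sqrt ind * Real.sqrt ((τ (star (E (star (l i) * u * l j) -
          E (star (l i)) * u * E (l j)) * (E (star (l i) * u * l j) -
          E (star (l i)) * u * E (l j)))).re) :=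
          Finset.sum_le_sum fun j _ => Finset.sum_le_sum fun i _ => hCS i j
      _ = Real.sqrt ind * ∑ j, ∑ i, Real.sqrt ((τ (star (E (star (l i) * u * l j) -
          E (star (l i)) * u * E (l j)) * (E (star (l i) * u * l j) -
          E (star (l i)) * u * E (l j)))).re) := by
          rw [Finset.mul_sum]
          exact Finset.sum_congr rfl fun j _ => (Finset.mul_sum _ _ _).symm
  have hlt : ∑ j, ∑ i, Real.sqrt ((τ (star (E (star (l i) * u * l j) -
      E (star (l i)) * u * E (l j)) * (E (star (l i) * u * l j) -
      E (star (l i)) * u * E (l j)))).re) < (k : ℝ) ^ 2 * ε := by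
    have h1 : ∀ j, ∑ i, Real.sqrt ((τ (star (E (star (l i) * u * l j) -
        E (star (l i)) * u * E (l j)) * (E (star (l i) * u * l j) -
        E (star (l i)) * u * E (l j)))).re) < (k : ℝ) * ε := by
      intro j
      calc (∑ i, Real.sqrt _) < ∑ _i : Fin k, ε :=
            Finset.sum_lt_sum_of_nonempty Finset.univ_nonempty fun i _ => hcon i j
        _ = (k : ℝ) * ε := by simp [Finset.sum_const, nsmul_eq_mul]
    calc (∑ j, ∑ i, Real.sqrt _) < ∑ _j : Fin k, (k : ℝ) * ε :=
          Finset.sum_lt_sum_of_nonempty Finset.univ_nonempty fun j _ => h1 j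
      _ = (k : ℝ) ^ 2 * ε := by
          simp [Finset.sum_const, nsmul_eq_mul]; ring
  have hfinal : Real.sqrt ind * ((k : ℝ) ^ 2 * ε) = C := by
    rw [hε]
    field_simp
  have : C < C := by
    calc C ≤ Real.sqrt ind * ∑ j, ∑ i, Real.sqrt _ := hstep
      _ < Real.sqrt ind * ((k : ℝ) ^ 2 * ε) := by
          exact mul_lt_mul_of_pos_left hlt hsqrtpos
      _ = C := hfinal
  exact lt_irrefl _ this
end

section
/- Let N ⊆ M be II₁ factors with Jones index [M:N] > 2 and suppose dim(N′ ∩ ⟨M, e_N⟩) = 2 (i.e., N′ ∩ ⟨M,e_N⟩ is spanned by e_N and 1 − e_N). Then N is singular in M: every unitary u ∈ M with uNu* = N lies in N. -/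
/-!
Conjugating `e` by `u` gives an idempotent `z = u e u*` of trace `Tr e = 1` which commutes with
`N` (because `u* N u ⊆ N`), so `z = a e + b (1 - e)`. Cutting `z` down by `e` and by `1 - e`
(both nonzero, having traces `1` and `[M:N] - 1`) shows `a, b ∈ {0, 1}`, and then
`1 = Tr z = a + b ([M:N] - 1)` with `[M:N] > 2` forces `a = 1`, `b = 0`. Hence `u e u* = e`:
`u` commutes with `e`, so it lies in `{e}' ∩ M = N`.
-/

section Monoid

variable {A : Type*} [Monoid A] {u v e y : A}

theorem IsIdempotentElem.mul_mul_of_mul_eq_one (he : IsIdempotentElem e) (hvu : v * u = 1) :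
    IsIdempotentElem (u * e * v) :=
  calc u * e * v * (u * e * v) = u * (e * (v * u) * e) * v := by simp only [mul_assoc]
    _ = u * e * v := by rw [hvu, mul_one, he.eq, mul_assoc]

theorem Commute.mul_mul_of_mul_eq_one (huv : u * v = 1) (h : Commute e (v * y * u)) :
    Commute (u * e * v) y :=
  calc u * e * v * y = u * (e * (v * y * u)) * v := by
        simp only [mul_assoc, huv, mul_one]
    _ = u * (v * y * u * e) * v := by rw [h.eq]
    _ = u * v * y * (u * e * v) := by simp only [mul_assoc]
    _ = y * (u * e * v) := by rw [huv, one_mul]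

theorem commute_of_mul_mul_eq (hvu : v * u = 1) (h : u * e * v = e) : Commute u e :=
  calc u * e = u * e * v * u := by rw [mul_assoc _ v, hvu, mul_one]
    _ = e * u := by rw [h]

theorem map_mul_mul_of_mul_eq_one {B : Type*} {Tr : A → B}
    (hTr : ∀ x y, Tr (x * y) = Tr (y * x)) (hvu : v * u = 1) : Tr (u * e * v) = Tr e := by
  rw [hTr, ← mul_assoc, hvu, one_mul]

end Monoid

section Algebra

variable {K A : Type*} [Field K] [Ring A] [Algebra K A]

theorem IsIdempotentElem.of_mul_eq_smul {z p : A} {c : K} (hz : IsIdempotentElem z) (hp : p ≠ 0)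
    (hzp : z * p = c • p) : IsIdempotentElem c :=
  smul_left_injective K hp <|
    calc (c * c) • p = z * (z * p) := by rw [hzp, mul_smul_comm, hzp, smul_smul]
      _ = c • p := by rw [← mul_assoc, hz.eq, hzp]

theorem IsIdempotentElem.smul_add_smul_one_sub_mul_self {e : A} (he : IsIdempotentElem e)
    (a b : K) :
    (a • e + b • (1 - e)) * e = a • e := by
  rw [add_mul, smul_mul_assoc, smul_mul_assoc, he.eq, he.one_sub_mul_self, smul_zero, add_zero]

theorem IsIdempotentElem.smul_add_smul_one_sub_mul_one_sub {e : A} (he : IsIdempotentElem e)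
    (a b : K) :
    (a • e + b • (1 - e)) * (1 - e) = b • (1 - e) := by
  rw [add_mul, smul_mul_assoc, smul_mul_assoc, he.mul_one_sub_self, he.one_sub.eq, smul_zero,
    zero_add]

end Algebra

theorem eq_one_and_eq_zero_of_add_mul_sub_one {a b : ℂ} {r : ℝ} (ha : a = 0 ∨ a = 1)
    (hb : b = 0 ∨ b = 1) (hr : 2 < r) (h : a + b * (r - 1) = 1) : a = 1 ∧ b = 0 := by
  rcases ha with rfl | rfl <;> rcases hb with rfl | rfl
  · norm_num at h
  · have h2 : r = 2 := by exact_mod_cast (by linear_combination h : (r : ℂ) = 2)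
    linarith
  · exact ⟨rfl, rfl⟩
  · norm_num at h
    linarith

theorem stmt_14_general {A : Type*} [Ring A] [StarRing A] [Algebra ℂ A] [StarModule ℂ A]
    (M N : StarSubalgebra ℂ A)
    (Tr : A →ₗ[ℂ] ℂ) (e : A)
    (he2 : e * e = e)
    (heN : ∀ y ∈ N, e * y = y * e)
    (hcomm : ∀ x ∈ M, x * e = e * x → x ∈ N)  -- `{e}' ∩ M = N`
    (hTrtrace : ∀ x y : A, Tr (x * y) = Tr (y * x))
    (hTre : Tr e = 1)
    (ind : ℝ) (hTr1 : Tr 1 = (ind : ℂ)) (hind : 2 < ind)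
    -- `N' ∩ ⟨M, e_N⟩` is spanned by `e` and `1 − e`
    (hrelcomm : ∀ z : A, (∀ y ∈ N, z * y = y * z) →
      ∃ a b : ℂ, z = a • e + b • (1 - e))
    (u : A) (huM : u ∈ M) (hu1 : star u * u = 1) (hu2 : u * star u = 1)
    (hnorm' : ∀ y ∈ N, star u * y * u ∈ N) :
    u ∈ N := by
  have he : IsIdempotentElem e := he2
  set z := u * e * star u with hz
  have hz_idem : IsIdempotentElem z := he.mul_mul_of_mul_eq_one hu1
  obtain ⟨a, b, hzab⟩ := hrelcomm z fun y hy ↦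
    Commute.mul_mul_of_mul_eq_one hu2 (heN _ (hnorm' y hy))
  have hTr_compl : Tr (1 - e) = ind - 1 := by rw [map_sub, hTr1, hTre]
  have he_ne : e ≠ 0 := ne_zero_of_map (f := Tr) (by simp [hTre])
  have he_compl_ne : 1 - e ≠ 0 := ne_zero_of_map (f := Tr) <| by
    rw [hTr_compl, sub_ne_zero]; exact_mod_cast (by linarith : ind ≠ 1)
  have ha := IsIdempotentElem.iff_eq_zero_or_one.1 <| hz_idem.of_mul_eq_smul he_ne <| by
    rw [hzab, he.smul_add_smul_one_sub_mul_self]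
  have hb := IsIdempotentElem.iff_eq_zero_or_one.1 <| hz_idem.of_mul_eq_smul he_compl_ne <| by
    rw [hzab, he.smul_add_smul_one_sub_mul_one_sub]
  have htrace : a + b * (ind - 1) = 1 := by
    have hTrz : Tr z = 1 := by rw [hz, map_mul_mul_of_mul_eq_one hTrtrace hu1, hTre]
    rwa [hzab, map_add, map_smul, map_smul, hTre, hTr_compl, smul_eq_mul, smul_eq_mul,
      mul_one] at hTrz
  obtain ⟨rfl, rfl⟩ := eq_one_and_eq_zero_of_add_mul_sub_one ha hb hind htrace
  have hze : z = e := by rw [hzab, one_smul, zero_smul, add_zero]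
  exact hcomm u huM (commute_of_mul_mul_eq hu1 hze).eq

/-- If `N ⊆ M` has Jones index `[M:N] = Tr 1 > 2` and the relative commutant
`N' ∩ ⟨M, e_N⟩` is two-dimensional (spanned by `e_N` and `1 − e_N`), then `N` is singular
in `M`: every unitary `u ∈ M` normalizing `N` lies in `N`.

The ambient algebra `A` plays the role of the basic construction `⟨M, e_N⟩`, with trace
`Tr` satisfying `Tr(e) = 1`, `Tr(1) = [M:N] > 2`, `{e}' ∩ M = N`, and `e` commuting
with `N`. -/
theorem stmt_14 {A : Type*} [Ring A] [StarRing A] [Algebra ℂ A] [StarModule ℂ A]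
    (M N : StarSubalgebra ℂ A) (hNM : N ≤ M)
    (Tr : A →ₗ[ℂ] ℂ) (e : A)
    (he2 : e * e = e) (hestar : star e = e)
    (heN : ∀ y ∈ N, e * y = y * e)
    (hcomm : ∀ x ∈ M, x * e = e * x → x ∈ N)  -- `{e}' ∩ M = N`
    (hTrtrace : ∀ x y : A, Tr (x * y) = Tr (y * x))
    (hTrfaithful : ∀ x : A, Tr (star x * x) = 0 → x = 0)
    (hTre : Tr e = 1)
    (ind : ℝ) (hTr1 : Tr 1 = (ind : ℂ)) (hind : 2 < ind)
    -- `N' ∩ ⟨M, e_N⟩` is spanned by `e` and `1 − e`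
    (hrelcomm : ∀ z : A, (∀ y ∈ N, z * y = y * z) →
      ∃ a b : ℂ, z = a • e + b • (1 - e))
    (u : A) (huM : u ∈ M) (hu1 : star u * u = 1) (hu2 : u * star u = 1)
    (hnorm : ∀ y ∈ N, u * y * star u ∈ N) (hnorm' : ∀ y ∈ N, star u * y * u ∈ N) :
    u ∈ N :=
  stmt_14_general M N Tr e he2 heN hcomm hTrtrace hTre ind hTr1 hind hrelcomm u huM hu1 hu2 hnorm'
end
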